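/- Let (X,G) be a dynamical system over a σ-compact locally compact abelian group G, d a metric on X generating its topology, and (B_n) a Følner sequence in G. For x ∈ X the following are equivalent: (i) x is mean almost periodic; (ii) for every continuous f : X → ℂ the function f_x is a mean almost periodic function; (iii) the set {f ∈ C(X) : f_x is mean almost periodic} separates the points of the orbit closure of x; (iv) for every s ∈ G the function G → ℝ, t ↦ d(sx, tx), is mean almost periodic. -/

import Mathlib

/-!
Continuous functions on the compact space `X` are uniformly continuous for `d`, i.e.
`‖f y - f z‖ ≤ ε + c d(y, z)`; averaging this along the orbit turns almost periods of `x` for the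
averaged pseudometric into almost periods of `f_x`, and `|d(sx, ux) - d(sx, vx)| ≤ d(ux, vx)` does
the same for `t ↦ d(sx, tx)`. Both kinds of functions separate the points of the orbit closure.

Conversely, by compactness of the orbit closure a separating family of mean almost periodic
functions contains finitely many `f_i` with `d(y, z) ≤ ε + c ∑ ‖f_i y - f_i z‖` there. The upper
mean is translation invariant along a Følner sequence, so each `f_i` makes `G` a totally bounded
pseudometric space, and hence the `f_i` have a relatively dense set of common almost periods.
Averaging the inequality shows that these are almost periods of `x`.
-/

open MeasureTheory Filter Topology Set Pointwise

noncomputable section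

namespace APPaper

/-- A subset `A` of `G` is relatively dense if there is a compact `K ⊆ G` with
`G = ⋃_{a ∈ A} (a + K)`. -/
def RelDense {G : Type*} [AddCommGroup G] [TopologicalSpace G] (A : Set G) : Prop :=
  ∃ K : Set G, IsCompact K ∧ ∀ g : G, ∃ a ∈ A, g - a ∈ K

/-- A continuous character of `G`, i.e. a continuous homomorphism into the unit circle
(realized inside `ℂ`). -/
def IsChar {G : Type*} [AddCommGroup G] [TopologicalSpace G] (ξ : G → ℂ) : Prop :=
  Continuous ξ ∧ (∀ t, ‖ξ t‖ = 1) ∧ ∀ s t, ξ (s + t) = ξ s * ξ t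

/-- `B` is a Følner sequence (of open, relatively compact, nonempty sets) for the
measure `μ` on `G`. -/
structure IsFolner {G : Type*} [AddCommGroup G] [TopologicalSpace G] [MeasurableSpace G]
    (μ : Measure G) (B : ℕ → Set G) : Prop where
  isOpen : ∀ n, IsOpen (B n)
  nonempty : ∀ n, (B n).Nonempty
  relCompact : ∀ n, IsCompact (closure (B n))
  folner : ∀ t : G,
    Tendsto (fun n => (μ ((B n \ (t +ᵥ B n)) ∪ ((t +ᵥ B n) \ B n))).toReal / (μ (B n)).toReal)
      atTop (𝓝 0)

/-- The average `(1/|B n|) ∫_{B n} h` of a real valued function. -/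
def avg {G : Type*} [MeasurableSpace G] (μ : Measure G) (B : ℕ → Set G) (n : ℕ)
    (h : G → ℝ) : ℝ :=
  (μ (B n)).toReal⁻¹ * ∫ t in B n, h t ∂μ

/-- The average `(1/|B n|) ∫_{B n} h` of a complex valued function. -/
def avgC {G : Type*} [MeasurableSpace G] (μ : Measure G) (B : ℕ → Set G) (n : ℕ)
    (h : G → ℂ) : ℂ :=
  (μ (B n)).toReal⁻¹ • ∫ t in B n, h t ∂μ

/-- The upper mean `M̄(h) = limsup_n (1/|B n|) ∫_{B n} h` along the Følner sequence. -/
def upperMean {G : Type*} [MeasurableSpace G] (μ : Measure G) (B : ℕ → Set G) (h : G → ℝ) : ℝ :=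
  Filter.limsup (fun n => avg μ B n h) Filter.atTop

/-- The upper density `Dens(A) = M̄(1_A)` of a subset of `G`. -/
def upperDens {G : Type*} [MeasurableSpace G] (μ : Measure G) (B : ℕ → Set G) (A : Set G) : ℝ :=
  upperMean μ B (A.indicator fun _ => (1 : ℝ))

/-- `M̄_n(h) = sup_{r ∈ G} (1/|B n|) ∫_{B n + r} h`. -/
def supAvg {G : Type*} [AddCommGroup G] [MeasurableSpace G] (μ : Measure G) (B : ℕ → Set G)
    (n : ℕ) (h : G → ℝ) : ℝ :=
  ⨆ r : G, (μ (B n)).toReal⁻¹ * ∫ t in (r +ᵥ B n), h t ∂μ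

/-- A function `f : G → E` is mean almost periodic (w.r.t. `(B n)`) if for each `ε > 0` the set
of `t` with `M̄(‖f - f(· - t)‖) < ε` is relatively dense. -/
def MeanAPFun {G : Type*} [AddCommGroup G] [TopologicalSpace G] [MeasurableSpace G]
    (μ : Measure G) (B : ℕ → Set G) {E : Type*} [NormedAddCommGroup E] (f : G → E) : Prop :=
  ∀ ε : ℝ, 0 < ε → RelDense {t : G | upperMean μ B (fun s => ‖f s - f (s - t)‖) < ε}

/-- A function `f : G → ℂ` is Besicovitch almost periodic (w.r.t. `(B n)`) if it can be
approximated, in the seminorm `M̄(|·|)`, by finite linear combinations of continuous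
characters. -/
def BesicovitchAPFun {G : Type*} [AddCommGroup G] [TopologicalSpace G] [MeasurableSpace G]
    (μ : Measure G) (B : ℕ → Set G) (f : G → ℂ) : Prop :=
  ∀ ε : ℝ, 0 < ε → ∃ (k : ℕ) (ξ : Fin k → G → ℂ) (c : Fin k → ℂ),
    (∀ j, IsChar (ξ j)) ∧ upperMean μ B (fun s => ‖f s - ∑ j, c j * ξ j s‖) < ε

/-- A function `f : G → E` is Bohr almost periodic if for every `ε > 0` the set of `t` with
`‖f - f(· - t)‖_∞ < ε` is relatively dense. -/
def BohrAPFun {G : Type*} [AddCommGroup G] [TopologicalSpace G] {E : Type*}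
    [NormedAddCommGroup E] (f : G → E) : Prop :=
  ∀ ε : ℝ, 0 < ε → RelDense {t : G | (⨆ s : G, ‖f s - f (s - t)‖) < ε}

/-- The orbit `{t +ᵥ x : t ∈ G}` of a point. -/
def orbitSet (G : Type*) {X : Type*} [AddCommGroup G] [AddAction G X] (x : X) : Set X :=
  Set.range fun t : G => t +ᵥ x

/-- The averaged pseudometric `D(x,y) = M̄(s ↦ dist(s x, s y))`. -/
def avgDist {G : Type*} [AddCommGroup G] [MeasurableSpace G] {X : Type*} [PseudoMetricSpace X]
    [AddAction G X] (μ : Measure G) (B : ℕ → Set G) (x y : X) : ℝ :=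
  upperMean μ B fun s => dist (s +ᵥ x) (s +ᵥ y)

/-- A point `x` is mean almost periodic (w.r.t. the metric of `X` and `(B n)`) if for every
`ε > 0` the set `{t : D(x, t x) < ε}` is relatively dense. -/
def MeanAPPoint {G : Type*} [AddCommGroup G] [TopologicalSpace G] [MeasurableSpace G]
    {X : Type*} [PseudoMetricSpace X] [AddAction G X] (μ : Measure G) (B : ℕ → Set G)
    (x : X) : Prop :=
  ∀ ε : ℝ, 0 < ε → RelDense {t : G | avgDist μ B x (t +ᵥ x) < ε}

/-- Mean almost periodicity of a point with respect to an abstract metric `d` on `X`. -/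
def MeanAPPointWith {G : Type*} [AddCommGroup G] [TopologicalSpace G] [MeasurableSpace G]
    {X : Type*} [AddAction G X] (μ : Measure G) (B : ℕ → Set G) (d : X → X → ℝ)
    (x : X) : Prop :=
  ∀ ε : ℝ, 0 < ε → RelDense {t : G | upperMean μ B (fun s => d (s +ᵥ x) (s +ᵥ (t +ᵥ x))) < ε}

/-- A point `x` is Besicovitch almost periodic if `t ↦ f (t +ᵥ x)` is a Besicovitch almost
periodic function for every continuous `f : X → ℂ`. -/
def BesicovitchAPPoint {G : Type*} [AddCommGroup G] [TopologicalSpace G] [MeasurableSpace G]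
    {X : Type*} [TopologicalSpace X] [AddAction G X] (μ : Measure G) (B : ℕ → Set G)
    (x : X) : Prop :=
  ∀ f : C(X, ℂ), BesicovitchAPFun μ B fun t : G => f (t +ᵥ x)

/-- The averaged pseudometric `D_n(x,y) = M̄_n(s ↦ dist(s x, s y))` at level `n`. -/
def weylDist {G : Type*} [AddCommGroup G] [MeasurableSpace G] {X : Type*} [PseudoMetricSpace X]
    [AddAction G X] (μ : Measure G) (B : ℕ → Set G) (n : ℕ) (x y : X) : ℝ :=
  supAvg μ B n fun s => dist (s +ᵥ x) (s +ᵥ y)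

/-- A point `x` is Weyl almost periodic if for every `ε > 0` there is an `N` such that
`{t : D_N(x, t x) < ε}` is relatively dense. -/
def WeylAPPoint {G : Type*} [AddCommGroup G] [TopologicalSpace G] [MeasurableSpace G]
    {X : Type*} [PseudoMetricSpace X] [AddAction G X] (μ : Measure G) (B : ℕ → Set G)
    (x : X) : Prop :=
  ∀ ε : ℝ, 0 < ε → ∃ N : ℕ, RelDense {t : G | weylDist μ B N x (t +ᵥ x) < ε}

/-- A point `y` is generic for the measure `m` along `(B n)`. -/
def IsGeneric {G : Type*} [AddCommGroup G] [MeasurableSpace G] {X : Type*}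
    [TopologicalSpace X] [MeasurableSpace X] [AddAction G X] (μ : Measure G) (B : ℕ → Set G)
    (m : Measure X) (y : X) : Prop :=
  ∀ f : C(X, ℂ),
    Tendsto (fun n => avgC μ B n fun t => f (t +ᵥ y)) atTop (𝓝 (∫ z, f z ∂m))

/-- The measure `m` is invariant under the action of `G`. -/
def InvariantMeasure (G : Type*) [AddCommGroup G] {X : Type*} [MeasurableSpace X]
    [AddAction G X] (m : Measure X) : Prop :=
  ∀ t : G, MeasurePreserving (fun x : X => t +ᵥ x) m m

/-- The measure `m` is ergodic for the action of `G`. -/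
def ErgodicMeasure (G : Type*) [AddCommGroup G] {X : Type*} [MeasurableSpace X]
    [AddAction G X] (m : Measure X) : Prop :=
  ∀ A : Set X, MeasurableSet A → (∀ t : G, (fun x : X => t +ᵥ x) ⁻¹' A = A) →
    m A = 0 ∨ m A = 1

/-- `f` is an eigenfunction of `(X,G,m)` with eigenvalue the continuous character `ξ`. -/
def IsEigenfunctionWith {G : Type*} [AddCommGroup G] [TopologicalSpace G] {X : Type*}
    [MeasurableSpace X] [AddAction G X] (m : Measure X) (ξ : G → ℂ) (f : X → ℂ) : Prop :=
  IsChar ξ ∧ MemLp f 2 m ∧ ¬ f =ᵐ[m] (fun _ => (0 : ℂ)) ∧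
    ∀ t : G, (fun x => f (t +ᵥ x)) =ᵐ[m] fun x => ξ t * f x

/-- The set of eigenvalues of `(X,G,m)`. -/
def Eig (G : Type*) [AddCommGroup G] [TopologicalSpace G] {X : Type*} [MeasurableSpace X]
    [AddAction G X] (m : Measure X) : Set (G → ℂ) :=
  {ξ | ∃ f : X → ℂ, IsEigenfunctionWith m ξ f}

/-- `(X,G,m)` has pure point spectrum: `L²(X,m)` possesses an orthonormal (Hilbert) basis
consisting of eigenfunctions. -/
def PurePointSpectrum (G : Type*) [AddCommGroup G] [TopologicalSpace G] {X : Type*}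
    [MeasurableSpace X] [AddAction G X] (m : Measure X) : Prop :=
  ∃ (ι : Type) (b : HilbertBasis ι ℂ (Lp ℂ 2 m)), ∀ i : ι,
    ∃ (ξ : G → ℂ) (f : X → ℂ) (hf : MemLp f 2 m),
      IsEigenfunctionWith m ξ f ∧ b i = hf.toLp f

/-- Every eigenvalue of `(X,G,m)` admits a continuous eigenfunction. -/
def ContinuousEigenfunctions (G : Type*) [AddCommGroup G] [TopologicalSpace G] {X : Type*}
    [TopologicalSpace X] [MeasurableSpace X] [AddAction G X] (m : Measure X) : Prop :=
  ∀ ξ ∈ Eig G m, ∃ f : X → ℂ, Continuous f ∧ IsEigenfunctionWith m ξ f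

/-- The set of frequencies of a point `x`: those continuous characters `ξ` for which the
average `A((t ↦ f(t +ᵥ x)) ⋅ conj ξ)` exists and is nonzero for some `f ∈ C(X)`. -/
def Freq {G : Type*} [AddCommGroup G] [TopologicalSpace G] [MeasurableSpace G] {X : Type*}
    [TopologicalSpace X] [AddAction G X] (μ : Measure G) (B : ℕ → Set G) (x : X) :
    Set (G → ℂ) :=
  {ξ | IsChar ξ ∧ ∃ (f : C(X, ℂ)) (c : ℂ), c ≠ 0 ∧
    Tendsto (fun n => avgC μ B n fun t => f (t +ᵥ x) * (starRingEnd ℂ) (ξ t)) atTop (𝓝 c)}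

/-- Birkhoff's ergodic theorem holds along `(B n)` for `(X,G,m)`. -/
def BirkhoffAlong {G : Type*} [AddCommGroup G] [MeasurableSpace G] {X : Type*}
    [MeasurableSpace X] [AddAction G X] (μ : Measure G) (B : ℕ → Set G) (m : Measure X) :
    Prop :=
  ∀ f : X → ℂ, Integrable f m →
    ∀ᵐ x ∂m, Tendsto (fun n => avgC μ B n fun t => f (t +ᵥ x)) atTop (𝓝 (∫ z, f z ∂m))

/-- `e` is (a representative of) the orthogonal projection in `L²(X,m)` of `f` onto the
eigenspace of `ξ`: it belongs to the eigenspace and `f - e` is orthogonal to it. -/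
def IsProjOnEigenspace {G : Type*} [AddCommGroup G] {X : Type*} [MeasurableSpace X]
    [AddAction G X] (m : Measure X) (ξ : G → ℂ) (f e : X → ℂ) : Prop :=
  MemLp e 2 m ∧ (∀ t : G, (fun x => e (t +ᵥ x)) =ᵐ[m] fun x => ξ t * e x) ∧
    ∀ g : X → ℂ, MemLp g 2 m → (∀ t : G, (fun x => g (t +ᵥ x)) =ᵐ[m] fun x => ξ t * g x) →
      ∫ x, (f x - e x) * (starRingEnd ℂ) (g x) ∂m = 0

/-- `d` is a metric on the topological space `X` which generates its topology. -/
structure IsCompatMetric {X : Type*} [TopologicalSpace X] (d : X → X → ℝ) : Prop where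
  refl : ∀ x, d x x = 0
  eq_of : ∀ x y, d x y = 0 → x = y
  symm : ∀ x y, d x y = d y x
  triangle : ∀ x y z, d x z ≤ d x y + d y z
  nhds_basis : ∀ x : X, (𝓝 x).HasBasis (fun ε : ℝ => 0 < ε) fun ε => {y | d x y < ε}

/-- The metric `d̄(y,z) = sup_{s ∈ G} dist (s y) (s z)`. -/
def supDist (G : Type*) [AddCommGroup G] {X : Type*} [PseudoMetricSpace X] [AddAction G X]
    (y z : X) : ℝ :=
  ⨆ s : G, dist (s +ᵥ y) (s +ᵥ z)

/-- The function `f_x : t ↦ f (t +ᵥ x)` as a bounded continuous function on `G`. -/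
def fnAlong {G : Type*} [AddCommGroup G] [TopologicalSpace G] {X : Type*}
    [TopologicalSpace X] [CompactSpace X] [AddAction G X] [ContinuousVAdd G X]
    (f : C(X, ℂ)) (x : X) : BoundedContinuousFunction G ℂ :=
  BoundedContinuousFunction.ofNormedAddCommGroup (fun t => f (t +ᵥ x))
    (f.continuous.comp (continuous_vadd.comp (continuous_id.prodMk continuous_const)))
    ‖f‖ (fun t => f.norm_coe_le_norm _)

/-- The translate `F(· - t)` of a bounded continuous function on `G`. -/
def translateB {G : Type*} [AddCommGroup G] [TopologicalSpace G] [IsTopologicalAddGroup G]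
    (t : G) (F : BoundedContinuousFunction G ℂ) : BoundedContinuousFunction G ℂ :=
  F.compContinuous ⟨fun s => s - t, continuous_sub_right t⟩

/-- A bounded continuous function on `G` is weakly almost periodic if it is uniformly
continuous and its set of translates is relatively compact in the weak topology. -/
def WeaklyAPFun {G : Type*} [AddCommGroup G] [UniformSpace G] [IsUniformAddGroup G]
    (F : BoundedContinuousFunction G ℂ) : Prop :=
  UniformContinuous ⇑F ∧
    IsCompact (closure
      ((toWeakSpace ℂ (BoundedContinuousFunction G ℂ)) '' Set.range fun t : G => translateB t F))

/-- A point `x` is weakly almost periodic if `f_x` is weakly almost periodic for every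
continuous `f : X → ℂ`. -/
def WeaklyAPPoint (G : Type*) [AddCommGroup G] [UniformSpace G] [IsUniformAddGroup G]
    {X : Type*} [TopologicalSpace X] [CompactSpace X] [AddAction G X] [ContinuousVAdd G X]
    (x : X) : Prop :=
  ∀ f : C(X, ℂ), WeaklyAPFun (G := G) (fnAlong f x)

/-- A point `x` is Bohr almost periodic if `f_x` is Bohr almost periodic for every
continuous `f : X → ℂ`. -/
def BohrAPPoint (G : Type*) [AddCommGroup G] [TopologicalSpace G] {X : Type*}
    [TopologicalSpace X] [AddAction G X] (x : X) : Prop :=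
  ∀ f : C(X, ℂ), BohrAPFun fun t : G => f (t +ᵥ x)

/-- The function `f_t : x ↦ f (t +ᵥ x)` as a continuous function on `X`. -/
def translateCM {G : Type*} [AddCommGroup G] {X : Type*} [TopologicalSpace X] [AddAction G X]
    [ContinuousConstVAdd G X] (t : G) (f : C(X, ℂ)) : C(X, ℂ) :=
  f.comp ⟨fun x => t +ᵥ x, continuous_const_vadd t⟩

/-- `(X,G)` is a weakly almost periodic dynamical system: for every `f ∈ C(X)` the family
`{f_t : t ∈ G}` is relatively compact in the weak topology of `C(X)`. -/
def WeaklyAPSystem (G : Type*) (X : Type*) [AddCommGroup G] [TopologicalSpace X]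
    [CompactSpace X] [T2Space X] [AddAction G X] [ContinuousConstVAdd G X] : Prop :=
  ∀ f : C(X, ℂ),
    IsCompact (closure ((toWeakSpace ℂ C(X, ℂ)) '' Set.range fun t : G => translateCM t f))

open scoped ENNReal

structure IsBoundedContinuous {α : Type*} [TopologicalSpace α] (h : α → ℝ) : Prop where
  continuous : Continuous h
  bounded : ∃ C, ∀ a, |h a| ≤ C

namespace IsBoundedContinuous

variable {α : Type*} [TopologicalSpace α] {h g : α → ℝ}

lemma const (c : ℝ) : IsBoundedContinuous fun _ : α => c :=
  ⟨continuous_const, |c|, fun _ => le_rfl⟩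

lemma add (hh : IsBoundedContinuous h) (hg : IsBoundedContinuous g) :
    IsBoundedContinuous fun a => h a + g a := by
  obtain ⟨C, hC⟩ := hh.bounded
  obtain ⟨D, hD⟩ := hg.bounded
  exact ⟨hh.continuous.add hg.continuous, C + D,
    fun a => (abs_add_le _ _).trans (add_le_add (hC a) (hD a))⟩

lemma const_add (hh : IsBoundedContinuous h) (c : ℝ) : IsBoundedContinuous fun a => c + h a :=
  (const c).add hh

lemma const_mul (hh : IsBoundedContinuous h) (c : ℝ) : IsBoundedContinuous fun a => c * h a := by
  obtain ⟨C, hC⟩ := hh.bounded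
  exact ⟨continuous_const.mul hh.continuous, |c| * C,
    fun a => (abs_mul c (h a)).trans_le (mul_le_mul_of_nonneg_left (hC a) (abs_nonneg c))⟩

lemma sum {ι : Type*} (S : Finset ι) {h : ι → α → ℝ} (hh : ∀ i ∈ S, IsBoundedContinuous (h i)) :
    IsBoundedContinuous fun a => ∑ i ∈ S, h i a := by
  classical
  induction S using Finset.induction_on with
  | empty => simpa using const (α := α) 0
  | insert i S hi ih =>
    simp_rw [Finset.sum_insert hi]
    exact (hh i (Finset.mem_insert_self i S)).add
      (ih fun j hj => hh j (Finset.mem_insert_of_mem hj))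

lemma comp {β : Type*} [TopologicalSpace β] (hh : IsBoundedContinuous h) {u : β → α}
    (hu : Continuous u) : IsBoundedContinuous fun b => h (u b) := by
  obtain ⟨C, hC⟩ := hh.bounded
  exact ⟨hh.continuous.comp hu, C, fun b => hC (u b)⟩

lemma integrableOn [MeasurableSpace α] [OpensMeasurableSpace α] {ν : Measure α}
    (hh : IsBoundedContinuous h) {S : Set α} (hS : ν S < ∞) : IntegrableOn h S ν := by
  obtain ⟨C, hC⟩ := hh.bounded
  have : IsFiniteMeasure (ν.restrict S) := ⟨by rwa [Measure.restrict_apply_univ]⟩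
  exact (integrable_const C).mono' hh.continuous.aestronglyMeasurable
    (Eventually.of_forall fun a => (Real.norm_eq_abs _).trans_le (hC a))

end IsBoundedContinuous

lemma abs_setIntegral_sub_setIntegral_le {α : Type*} [MeasurableSpace α] {ν : Measure α}
    {h : α → ℝ} {C : ℝ} (hC : ∀ a, |h a| ≤ C) {A A' : Set α} (hA : MeasurableSet A)
    (hA' : MeasurableSet A') (hAint : IntegrableOn h A ν) (hA'int : IntegrableOn h A' ν)
    (hAf : ν A < ∞) (hA'f : ν A' < ∞) :
    |∫ a in A', h a ∂ν - ∫ a in A, h a ∂ν| ≤ C * (ν ((A \ A') ∪ (A' \ A))).toReal := by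
  have hbound : ∀ S : Set α, ν S < ∞ → |∫ a in S, h a ∂ν| ≤ C * (ν S).toReal := fun S hS =>
    norm_setIntegral_le_of_norm_le_const hS fun a _ => (Real.norm_eq_abs _).trans_le (hC a)
  have hAA' : ν (A \ A') < ∞ := (measure_mono sdiff_subset).trans_lt hAf
  have hA'A : ν (A' \ A) < ∞ := (measure_mono sdiff_subset).trans_lt hA'f
  rw [← integral_inter_add_sdiff hA hA'int, ← integral_inter_add_sdiff hA' hAint, inter_comm A' A,
    add_sub_add_left_eq_sub, measure_union disjoint_sdiff_sdiff (hA'.diff hA),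
    ENNReal.toReal_add hAA'.ne hA'A.ne, mul_add, add_comm (C * _)]
  exact (abs_sub _ _).trans (add_le_add (hbound _ hA'A) (hbound _ hAA'))

section FolnerMean

lemma avg_const_mul {G : Type*} [MeasurableSpace G] (μ : Measure G) (B : ℕ → Set G) (n : ℕ)
    (c : ℝ) (h : G → ℝ) : avg μ B n (fun s => c * h s) = c * avg μ B n h := by
  rw [avg, avg, integral_const_mul, mul_left_comm]

variable {G : Type*} [AddCommGroup G] [TopologicalSpace G] [MeasurableSpace G]
  {μ : Measure G} [μ.IsAddHaarMeasure] {B : ℕ → Set G} {h g : G → ℝ}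

namespace IsFolner

lemma measure_lt_top (hB : IsFolner μ B) (n : ℕ) : μ (B n) < ∞ :=
  (measure_mono subset_closure).trans_lt (hB.relCompact n).measure_lt_top

lemma toReal_measure_pos (hB : IsFolner μ B) (n : ℕ) : 0 < (μ (B n)).toReal :=
  ENNReal.toReal_pos ((hB.isOpen n).measure_pos μ (hB.nonempty n)).ne' (hB.measure_lt_top n).ne

end IsFolner

lemma abs_avg_le (hB : IsFolner μ B) {C : ℝ} (hC : ∀ s, |h s| ≤ C) (n : ℕ) :
    |avg μ B n h| ≤ C := by
  have hpos := hB.toReal_measure_pos n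
  have hint : |∫ s in B n, h s ∂μ| ≤ C * (μ (B n)).toReal :=
    norm_setIntegral_le_of_norm_le_const (hB.measure_lt_top n)
      fun s _ => (Real.norm_eq_abs _).trans_le (hC s)
  rw [avg, abs_mul, abs_inv, abs_of_pos hpos, inv_mul_le_iff₀ hpos, mul_comm]
  exact hint

lemma isBoundedUnder_le_avg (hB : IsFolner μ B) (hh : IsBoundedContinuous h) :
    IsBoundedUnder (· ≤ ·) atTop fun n => avg μ B n h := by
  obtain ⟨C, hC⟩ := hh.bounded
  exact isBoundedUnder_of ⟨C, fun n => (abs_le.1 (abs_avg_le hB hC n)).2⟩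

lemma isBoundedUnder_ge_avg (hB : IsFolner μ B) (hh : IsBoundedContinuous h) :
    IsBoundedUnder (· ≥ ·) atTop fun n => avg μ B n h := by
  obtain ⟨C, hC⟩ := hh.bounded
  exact isBoundedUnder_of ⟨-C, fun n => (abs_le.1 (abs_avg_le hB hC n)).1⟩

lemma avg_const (hB : IsFolner μ B) (c : ℝ) (n : ℕ) : avg μ B n (fun _ => c) = c := by
  rw [avg, setIntegral_const, smul_eq_mul, measureReal_def,
    inv_mul_cancel_left₀ (hB.toReal_measure_pos n).ne']

lemma upperMean_const (hB : IsFolner μ B) (c : ℝ) : upperMean μ B (fun _ => c) = c := by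
  simp only [upperMean, avg_const hB, limsup_const]

lemma upperMean_const_mul (hB : IsFolner μ B) (hh : IsBoundedContinuous h) {c : ℝ} (hc : 0 ≤ c) :
    upperMean μ B (fun s => c * h s) = c * upperMean μ B h := by
  simp only [upperMean, avg_const_mul]
  exact ((monotone_mul_left_of_nonneg hc).map_limsup_of_continuousAt _
    (continuous_const_mul c).continuousAt (isBoundedUnder_le_avg hB hh)
    (isBoundedUnder_ge_avg hB hh).isCoboundedUnder_le).symm

variable [BorelSpace G]

lemma avg_mono (hB : IsFolner μ B) (hh : IsBoundedContinuous h) (hg : IsBoundedContinuous g)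
    (hle : ∀ s, h s ≤ g s) (n : ℕ) : avg μ B n h ≤ avg μ B n g :=
  mul_le_mul_of_nonneg_left
    (setIntegral_mono (hh.integrableOn (hB.measure_lt_top n))
      (hg.integrableOn (hB.measure_lt_top n)) hle)
    (inv_nonneg.2 ENNReal.toReal_nonneg)

lemma avg_add (hB : IsFolner μ B) (hh : IsBoundedContinuous h) (hg : IsBoundedContinuous g)
    (n : ℕ) : avg μ B n (fun s => h s + g s) = avg μ B n h + avg μ B n g := by
  rw [avg, avg, avg, integral_add (hh.integrableOn (hB.measure_lt_top n))
    (hg.integrableOn (hB.measure_lt_top n)), mul_add]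

lemma upperMean_mono (hB : IsFolner μ B) (hh : IsBoundedContinuous h)
    (hg : IsBoundedContinuous g) (hle : ∀ s, h s ≤ g s) : upperMean μ B h ≤ upperMean μ B g :=
  limsup_le_limsup (Eventually.of_forall (avg_mono hB hh hg hle))
    (isBoundedUnder_ge_avg hB hh).isCoboundedUnder_le (isBoundedUnder_le_avg hB hg)

lemma upperMean_add_le (hB : IsFolner μ B) (hh : IsBoundedContinuous h)
    (hg : IsBoundedContinuous g) :
    upperMean μ B (fun s => h s + g s) ≤ upperMean μ B h + upperMean μ B g := by
  have hsplit : (fun n => avg μ B n fun s => h s + g s)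
      = (fun n => avg μ B n h) + fun n => avg μ B n g := funext (avg_add hB hh hg)
  rw [upperMean, hsplit]
  exact limsup_add_le (isBoundedUnder_ge_avg hB hh) (isBoundedUnder_le_avg hB hh)
    (isBoundedUnder_ge_avg hB hg).isCoboundedUnder_le (isBoundedUnder_le_avg hB hg)

lemma upperMean_const_add (hB : IsFolner μ B) (hh : IsBoundedContinuous h) (c : ℝ) :
    upperMean μ B (fun s => c + h s) = c + upperMean μ B h := by
  simp only [upperMean, avg_add hB (.const c) hh, avg_const hB]
  exact limsup_const_add _ _ c (isBoundedUnder_le_avg hB hh)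
    (isBoundedUnder_ge_avg hB hh).isCoboundedUnder_le

lemma upperMean_sum_le (hB : IsFolner μ B) {ι : Type*} (S : Finset ι) {h : ι → G → ℝ}
    (hh : ∀ i ∈ S, IsBoundedContinuous (h i)) :
    upperMean μ B (fun s => ∑ i ∈ S, h i s) ≤ ∑ i ∈ S, upperMean μ B (h i) := by
  classical
  induction S using Finset.induction_on with
  | empty => simp [upperMean_const hB]
  | insert i S hi ih =>
    have hS : ∀ j ∈ S, IsBoundedContinuous (h j) := fun j hj => hh j (Finset.mem_insert_of_mem hj)
    simp_rw [Finset.sum_insert hi]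
    exact (upperMean_add_le hB (hh i (Finset.mem_insert_self i S)) (.sum S hS)).trans
      (add_le_add_right (ih hS) _)

end FolnerMean

section Translation

variable {G : Type*} [AddCommGroup G] [TopologicalSpace G] [IsTopologicalAddGroup G]
  [MeasurableSpace G] [BorelSpace G] {μ : Measure G} [μ.IsAddHaarMeasure] {B : ℕ → Set G}
  {h : G → ℝ}

lemma setIntegral_comp_sub_right (h : G → ℝ) (t : G) (A : Set G) :
    ∫ s in A, h (s - t) ∂μ = ∫ s in (-t) +ᵥ A, h s ∂μ := by
  have hpre : (fun s => s - t) ⁻¹' ((-t) +ᵥ A) = A := by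
    ext s
    simp [Set.mem_vadd_set_iff_neg_vadd_mem, sub_eq_add_neg]
  rw [← (measurePreserving_sub_right μ t).setIntegral_preimage_emb
    (MeasurableEquiv.subRight t).measurableEmbedding h, hpre]

lemma tendsto_avg_comp_sub_right_sub_avg (hB : IsFolner μ B) (hh : IsBoundedContinuous h)
    (t : G) :
    Tendsto (fun n => avg μ B n (fun s => h (s - t)) - avg μ B n h) atTop (𝓝 0) := by
  obtain ⟨C, hC⟩ := hh.bounded
  have hbound : ∀ n, ‖avg μ B n (fun s => h (s - t)) - avg μ B n h‖ ≤
      C * ((μ ((B n \ ((-t) +ᵥ B n)) ∪ (((-t) +ᵥ B n) \ B n))).toReal / (μ (B n)).toReal) := by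
    intro n
    have hBn := hB.measure_lt_top n
    have htBn : μ ((-t) +ᵥ B n) < ∞ := by rwa [measure_vadd]
    rw [Real.norm_eq_abs, avg, avg, setIntegral_comp_sub_right, ← mul_sub, abs_mul, abs_inv,
      abs_of_pos (hB.toReal_measure_pos n), mul_div_assoc', div_eq_inv_mul]
    exact mul_le_mul_of_nonneg_left
      (abs_setIntegral_sub_setIntegral_le hC (hB.isOpen n).measurableSet
        ((hB.isOpen n).vadd (-t)).measurableSet (hh.integrableOn hBn) (hh.integrableOn htBn) hBn
        htBn)
      (inv_nonneg.2 ENNReal.toReal_nonneg)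
  exact squeeze_zero_norm hbound (by simpa using (hB.folner (-t)).const_mul C)

lemma upperMean_comp_sub_right_le (hB : IsFolner μ B) (hh : IsBoundedContinuous h) (t : G) :
    upperMean μ B (fun s => h (s - t)) ≤ upperMean μ B h := by
  have hdiff := tendsto_avg_comp_sub_right_sub_avg hB hh t
  calc upperMean μ B (fun s => h (s - t))
      = limsup ((fun n => avg μ B n h)
          + fun n => avg μ B n (fun s => h (s - t)) - avg μ B n h) atTop := by
        simp only [upperMean, Pi.add_def, add_sub_cancel]
    _ ≤ upperMean μ B h + limsup (fun n => avg μ B n (fun s => h (s - t)) - avg μ B n h) atTop :=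
        limsup_add_le (isBoundedUnder_ge_avg hB hh) (isBoundedUnder_le_avg hB hh)
          hdiff.isBoundedUnder_ge.isCoboundedUnder_le hdiff.isBoundedUnder_le
    _ = upperMean μ B h := by rw [hdiff.limsup_eq, add_zero]

lemma upperMean_comp_sub_right (hB : IsFolner μ B) (hh : IsBoundedContinuous h) (t : G) :
    upperMean μ B (fun s => h (s - t)) = upperMean μ B h := by
  refine le_antisymm (upperMean_comp_sub_right_le hB hh t) ?_
  simpa using upperMean_comp_sub_right_le hB (hh.comp (continuous_sub_right t)) (-t)

end Translation

section RelDense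

variable {G : Type*} [AddCommGroup G] [TopologicalSpace G]

lemma RelDense.mono {A A' : Set G} (h : RelDense A) (hAA' : A ⊆ A') : RelDense A' := by
  obtain ⟨K, hK, hcov⟩ := h
  exact ⟨K, hK, fun g => (hcov g).imp fun a ha => ⟨hAA' ha.1, ha.2⟩⟩

lemma RelDense.neg [IsTopologicalAddGroup G] {A : Set G} (h : RelDense A) : RelDense (-A) := by
  obtain ⟨K, hK, hcov⟩ := h
  refine ⟨-K, hK.neg, fun g => ?_⟩
  obtain ⟨a, ha, hga⟩ := hcov (-g)
  exact ⟨-a, by simpa using ha, by simpa [neg_add_eq_sub] using hga⟩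

end RelDense

section BoundedUniformlyContinuous

variable {G : Type*} [AddCommGroup G] [TopologicalSpace G] {E : Type*} [NormedAddCommGroup E]
  {f : G → E}

structure IsBoundedUniformlyContinuous (f : G → E) : Prop where
  continuous : Continuous f
  bounded : ∃ C, ∀ s, ‖f s‖ ≤ C
  uniformContinuous : ∀ ε > 0, ∀ᶠ u in 𝓝 (0 : G), ∀ s, ‖f (s - u) - f s‖ ≤ ε

lemma IsBoundedUniformlyContinuous.isBoundedContinuous_norm_sub [IsTopologicalAddGroup G]
    (hf : IsBoundedUniformlyContinuous f) (g k : G) :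
    IsBoundedContinuous fun s => ‖f (s - g) - f (s - k)‖ := by
  obtain ⟨C, hC⟩ := hf.bounded
  refine ⟨((hf.continuous.comp (continuous_sub_right g)).sub
    (hf.continuous.comp (continuous_sub_right k))).norm, C + C, fun s => ?_⟩
  rw [abs_norm]
  exact (norm_sub_le _ _).trans (add_le_add (hC _) (hC _))

end BoundedUniformlyContinuous

section MeanDist

variable {G : Type*} [AddCommGroup G] [MeasurableSpace G] {μ : Measure G} {B : ℕ → Set G}
  {E : Type*} [NormedAddCommGroup E] {f : G → E}

variable (μ B) in
/-- The pseudometric on `G` whose balls around `0` are the sets of almost periods of `f`. -/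
def meanDist (f : G → E) (g k : G) : ℝ :=
  upperMean μ B fun s => ‖f (s - g) - f (s - k)‖

lemma meanDist_zero_left (t : G) :
    meanDist μ B f 0 t = upperMean μ B fun s => ‖f s - f (s - t)‖ := by
  simp only [meanDist, sub_zero]

lemma meanDist_comm (g k : G) : meanDist μ B f g k = meanDist μ B f k g := by
  simp only [meanDist, norm_sub_rev]

variable [TopologicalSpace G] [IsTopologicalAddGroup G] [BorelSpace G] [μ.IsAddHaarMeasure]

lemma meanDist_triangle (hB : IsFolner μ B) (hf : IsBoundedUniformlyContinuous f) (g k r : G) :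
    meanDist μ B f g r ≤ meanDist μ B f g k + meanDist μ B f k r :=
  (upperMean_mono hB (hf.isBoundedContinuous_norm_sub g r)
      ((hf.isBoundedContinuous_norm_sub g k).add (hf.isBoundedContinuous_norm_sub k r))
      fun _ => norm_sub_le_norm_sub_add_norm_sub _ _ _).trans
    (upperMean_add_le hB (hf.isBoundedContinuous_norm_sub g k)
      (hf.isBoundedContinuous_norm_sub k r))

lemma meanDist_add_right (hB : IsFolner μ B) (hf : IsBoundedUniformlyContinuous f) (g k r : G) :
    meanDist μ B f (g + r) (k + r) = meanDist μ B f g k := by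
  simpa [meanDist, sub_sub, add_comm r] using
    upperMean_comp_sub_right hB (hf.isBoundedContinuous_norm_sub g k) r

lemma eventually_meanDist_le (hB : IsFolner μ B) (hf : IsBoundedUniformlyContinuous f) {ε : ℝ}
    (hε : 0 < ε) : ∀ᶠ u in 𝓝 (0 : G), meanDist μ B f u 0 ≤ ε := by
  filter_upwards [hf.uniformContinuous ε hε] with u hu
  calc meanDist μ B f u 0 ≤ upperMean μ B fun _ => ε :=
        upperMean_mono hB (hf.isBoundedContinuous_norm_sub u 0) (.const ε)
          fun s => by simpa using hu s
    _ = ε := upperMean_const hB ε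

lemma MeanAPFun.exists_finset_meanDist_lt (hB : IsFolner μ B)
    (hf : IsBoundedUniformlyContinuous f) (hap : MeanAPFun μ B f) {ε : ℝ} (hε : 0 < ε) :
    ∃ T : Finset G, ∀ g, ∃ t ∈ T, meanDist μ B f g t < ε := by
  obtain ⟨K, hK, hcov⟩ := hap (ε / 2) (half_pos hε)
  obtain ⟨V, hV, hVε⟩ := (eventually_meanDist_le hB hf (half_pos (half_pos hε))).exists_mem
  obtain ⟨T, -, hKT⟩ := hK.elim_nhds_subcover (fun k => (· - k) ⁻¹' V)
    fun k _ => (continuous_sub_right k).continuousAt.preimage_mem_nhds (by simpa using hV)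
  refine ⟨T, fun g => ?_⟩
  obtain ⟨a, ha, hga⟩ := hcov g
  obtain ⟨k, hkT, hk⟩ := mem_iUnion₂.1 (hKT hga)
  refine ⟨k, hkT, ?_⟩
  have hu : meanDist μ B f (g - k) a ≤ ε / 2 / 2 := by
    have hshift := meanDist_add_right hB hf (g - k - a) 0 a
    rw [sub_add_cancel, zero_add] at hshift
    rw [hshift, ← sub_right_comm]
    exact hVε _ hk
  have ha' : meanDist μ B f a 0 < ε / 2 := by
    rw [meanDist_comm, meanDist_zero_left]
    exact ha
  calc meanDist μ B f g k = meanDist μ B f (g - k) 0 := by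
        simpa using meanDist_add_right hB hf (g - k) 0 k
    _ ≤ meanDist μ B f (g - k) a + meanDist μ B f a 0 := meanDist_triangle hB hf _ _ _
    _ < ε := by linarith

lemma exists_finset_forall_meanDist_lt (hB : IsFolner μ B) {ι : Type*} [Fintype ι]
    {f : ι → G → E} (hf : ∀ i, IsBoundedUniformlyContinuous (f i))
    (hap : ∀ i, MeanAPFun μ B (f i)) {ε : ℝ} (hε : 0 < ε) :
    ∃ T : Finset G, ∀ g, ∃ t ∈ T, ∀ i, meanDist μ B (f i) g t < ε := by
  classical
  choose T hT using fun i => (hap i).exists_finset_meanDist_lt hB (hf i) (half_pos hε)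
  -- one point in each nonempty cell cut out by a tuple of points of the individual nets
  let cell (τ : ι → G) : Set G := {g | ∀ i, meanDist μ B (f i) g (τ i) < ε / 2}
  refine ⟨(Fintype.piFinset T).image fun τ => Classical.epsilon (· ∈ cell τ), fun g => ?_⟩
  choose τ hτT hτ using fun i => hT i g
  refine ⟨_, Finset.mem_image_of_mem _ (Fintype.mem_piFinset.2 hτT), fun i => ?_⟩
  have hr := Classical.epsilon_spec (p := (· ∈ cell τ)) ⟨g, hτ⟩ i
  calc meanDist μ B (f i) g (Classical.epsilon (· ∈ cell τ))
      ≤ meanDist μ B (f i) g (τ i) + meanDist μ B (f i) (τ i) (Classical.epsilon (· ∈ cell τ)) :=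
        meanDist_triangle hB (hf i) _ _ _
    _ < ε / 2 + ε / 2 := add_lt_add (hτ i) (by rwa [meanDist_comm])
    _ = ε := add_halves ε

lemma relDense_setOf_forall_meanDist_lt (hB : IsFolner μ B) {ι : Type*} [Fintype ι]
    {f : ι → G → E} (hf : ∀ i, IsBoundedUniformlyContinuous (f i))
    (hap : ∀ i, MeanAPFun μ B (f i)) {ε : ℝ} (hε : 0 < ε) :
    RelDense {t | ∀ i, meanDist μ B (f i) 0 t < ε} := by
  obtain ⟨T, hT⟩ := exists_finset_forall_meanDist_lt hB hf hap hε
  refine ⟨T, T.finite_toSet.isCompact, fun g => ?_⟩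
  obtain ⟨t, htT, ht⟩ := hT g
  refine ⟨g - t, fun i => ?_, by simpa using htT⟩
  have hshift := meanDist_add_right hB (hf i) 0 (g - t) t
  rw [zero_add, sub_add_cancel] at hshift
  rw [← hshift, meanDist_comm]
  exact ht i

end MeanDist

lemma exists_le_add_mul_of_isCompact {Y : Type*} [TopologicalSpace Y] {K : Set Y}
    (hK : IsCompact K) {φ ψ : Y → ℝ} (hφ : Continuous φ) (hψ : Continuous ψ)
    (hψ0 : ∀ p ∈ K, 0 ≤ ψ p) {ε : ℝ} (hε : 0 ≤ ε) (hpos : ∀ p ∈ K, ε ≤ φ p → 0 < ψ p) :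
    ∃ c ≥ 0, ∀ p ∈ K, φ p ≤ ε + c * ψ p := by
  obtain ⟨δ, hδ, hδψ⟩ := (hK.inter_right (isClosed_le continuous_const hφ)).exists_forall_le'
    hψ.continuousOn fun p hp => hpos p hp.1 hp.2
  obtain ⟨C, hC⟩ := hK.exists_bound_of_continuousOn hφ.continuousOn
  have hc : 0 ≤ max C 0 / δ := by positivity
  refine ⟨max C 0 / δ, hc, fun p hp => ?_⟩
  rcases lt_or_ge (φ p) ε with hlt | hge
  · nlinarith [hψ0 p hp]
  · calc φ p ≤ max C 0 := (le_abs_self _).trans ((hC p hp).trans (le_max_left _ _))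
      _ = max C 0 / δ * δ := (div_mul_cancel₀ _ hδ.ne').symm
      _ ≤ max C 0 / δ * ψ p := mul_le_mul_of_nonneg_left (hδψ p ⟨hp, hge⟩) hc
      _ ≤ ε + max C 0 / δ * ψ p := le_add_of_nonneg_left hε

namespace IsCompatMetric

variable {X : Type*} [TopologicalSpace X] {d : X → X → ℝ}

lemma nonneg (hd : IsCompatMetric d) (y z : X) : 0 ≤ d y z := by
  linarith [hd.triangle y z y, hd.refl y, hd.symm z y]

lemma pos_of_ne (hd : IsCompatMetric d) {y z : X} (h : y ≠ z) : 0 < d y z :=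
  (hd.nonneg y z).lt_of_ne fun h0 => h (hd.eq_of y z h0.symm)

lemma abs_sub_le (hd : IsCompatMetric d) (a y z : X) : |d a y - d a z| ≤ d y z := by
  rw [abs_sub_le_iff]
  constructor <;> linarith [hd.triangle a z y, hd.triangle a y z, hd.symm y z]

protected lemma continuous (hd : IsCompatMetric d) : Continuous fun p : X × X => d p.1 p.2 := by
  rw [continuous_iff_continuousAt]
  rintro ⟨y, z⟩
  rw [ContinuousAt, nhds_prod_eq, Metric.tendsto_nhds]
  intro ε hε
  rw [((hd.nhds_basis y).prod (hd.nhds_basis z)).eventually_iff]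
  refine ⟨(ε / 2, ε / 2), ⟨half_pos hε, half_pos hε⟩, ?_⟩
  rintro ⟨y', z'⟩ ⟨hy', hz'⟩
  have h₁ := hd.abs_sub_le y' z z'
  have h₂ := hd.abs_sub_le z y' y
  rw [hd.symm z y', hd.symm z y, hd.symm y' y] at h₂
  rw [Real.dist_eq]
  calc |d y' z' - d y z| ≤ |d y' z' - d y' z| + |d y' z - d y z| := _root_.abs_sub_le _ _ _
    _ < ε / 2 + ε / 2 := add_lt_add ((abs_sub_comm _ _).trans_le h₁ |>.trans_lt hz')
        (h₂.trans_lt hy')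
    _ = ε := add_halves ε

lemma continuous_right (hd : IsCompatMetric d) (y : X) : Continuous (d y) :=
  hd.continuous.comp (Continuous.prodMk_right y)

end IsCompatMetric

section CompactBounds

variable {X : Type*} [TopologicalSpace X] {d : X → X → ℝ} {E : Type*} [NormedAddCommGroup E]

lemma IsCompatMetric.exists_norm_sub_le_add_mul [CompactSpace X] (hd : IsCompatMetric d)
    (f : C(X, E)) {ε : ℝ} (hε : 0 < ε) : ∃ c ≥ 0, ∀ y z, ‖f y - f z‖ ≤ ε + c * d y z := by
  obtain ⟨c, hc, hle⟩ := exists_le_add_mul_of_isCompact isCompact_univ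
    (φ := fun p : X × X => ‖f p.1 - f p.2‖) (by fun_prop) hd.continuous
    (fun p _ => hd.nonneg _ _) hε.le fun p _ hp => hd.pos_of_ne fun h => by
      rw [h, sub_self, norm_zero] at hp
      linarith
  exact ⟨c, hc, fun y z => hle (y, z) trivial⟩

lemma IsCompatMetric.exists_finset_le_add_mul_sum (hd : IsCompatMetric d) {Y : Set X}
    (hY : IsCompact Y) {P : C(X, E) → Prop}
    (hsep : ∀ y ∈ Y, ∀ z ∈ Y, y ≠ z → ∃ f, P f ∧ f y ≠ f z) {ε : ℝ} (hε : 0 < ε) :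
    ∃ S : Finset C(X, E), (∀ f ∈ S, P f) ∧
      ∃ c ≥ 0, ∀ y ∈ Y, ∀ z ∈ Y, d y z ≤ ε + c * ∑ f ∈ S, ‖f y - f z‖ := by
  classical
  set K := (Y ×ˢ Y) ∩ {p | ε ≤ d p.1 p.2}
  have hK : IsCompact K := (hY.prod hY).inter_right (isClosed_le continuous_const hd.continuous)
  have hsepK : ∀ p ∈ K, ∃ f, P f ∧ f p.1 ≠ f p.2 := fun p hp =>
    hsep _ hp.1.1 _ hp.1.2 fun h => by
      have hεp : ε ≤ d p.1 p.2 := hp.2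
      rw [h, hd.refl] at hεp
      linarith
  choose! F hFP hFsep using hsepK
  obtain ⟨T, hTK, hKT⟩ := hK.elim_nhds_subcover (fun p => {q : X × X | F p q.1 ≠ F p q.2})
    fun p hp => (isOpen_ne_fun (by fun_prop) (by fun_prop)).mem_nhds (hFsep p hp)
  obtain ⟨c, hc, hle⟩ := exists_le_add_mul_of_isCompact (hY.prod hY) hd.continuous
    (ψ := fun p => ∑ f ∈ T.image F, ‖f p.1 - f p.2‖) (by fun_prop)
    (fun p _ => Finset.sum_nonneg fun _ _ => norm_nonneg _) hε.le fun p hp hεp => by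
      obtain ⟨q, hqT, hq⟩ := mem_iUnion₂.1 (hKT ⟨hp, hεp⟩)
      exact Finset.sum_pos' (fun _ _ => norm_nonneg _)
        ⟨F q, Finset.mem_image_of_mem F hqT, norm_pos_iff.2 (sub_ne_zero.2 hq)⟩
  exact ⟨T.image F, Finset.forall_mem_image.2 fun p hp => hFP p (hTK p hp), c, hc,
    fun y hy z hz => hle (y, z) ⟨hy, hz⟩⟩

end CompactBounds

lemma mul_div_two_mul_add_one_lt {a ε : ℝ} (ha : 0 ≤ a) (hε : 0 < ε) :
    a * (ε / (2 * (a + 1))) < ε / 2 := by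
  rw [mul_div_assoc', div_lt_div_iff₀ (by positivity) two_pos]
  nlinarith

lemma MeanAPFun.ofReal {G : Type*} [AddCommGroup G] [TopologicalSpace G] [MeasurableSpace G]
    {μ : Measure G} {B : ℕ → Set G} {g : G → ℝ} (hg : MeanAPFun μ B g) :
    MeanAPFun μ B fun t => (g t : ℂ) := by
  simpa only [MeanAPFun, ← Complex.ofReal_sub, Complex.norm_real] using hg

section Orbits

variable {G : Type*} [AddCommGroup G] {X : Type*} [AddAction G X]

lemma sub_vadd_eq_vadd_neg_vadd (s t : G) (x : X) : (s - t) +ᵥ x = s +ᵥ (-t +ᵥ x) := by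
  rw [sub_eq_add_neg, add_vadd]

variable [TopologicalSpace G] [TopologicalSpace X] [ContinuousVAdd G X] [CompactSpace X]

lemma isBoundedContinuous_orbit_pair {φ : X → X → ℝ} (hφ : Continuous (Function.uncurry φ))
    (x y : X) : IsBoundedContinuous fun s : G => φ (s +ᵥ x) (s +ᵥ y) := by
  obtain ⟨C, hC⟩ := isCompact_univ.exists_bound_of_continuousOn hφ.continuousOn
  exact ⟨hφ.comp ((continuous_id.vadd continuous_const).prodMk
    (continuous_id.vadd continuous_const)), C, fun s => hC (s +ᵥ x, s +ᵥ y) (mem_univ _)⟩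

lemma isBoundedUniformlyContinuous_comp_vadd [IsTopologicalAddGroup G] {E : Type*}
    [NormedAddCommGroup E] (f : C(X, E)) (x : X) :
    IsBoundedUniformlyContinuous fun t : G => f (t +ᵥ x) := by
  refine ⟨by fun_prop, ⟨‖f‖, fun t => f.norm_coe_le_norm _⟩, fun ε hε => ?_⟩
  have hcont : Continuous fun p : G × X => ‖f (p.1 +ᵥ p.2) - f p.2‖ := by fun_prop
  have hnear : ∀ᶠ u in 𝓝 (0 : G), ∀ y ∈ univ, ‖f (u +ᵥ y) - f y‖ < ε :=
    isCompact_univ.eventually_forall_of_forall_eventually fun y _ =>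
      hcont.continuousAt.eventually (gt_mem_nhds (by simpa using hε))
  filter_upwards [(continuous_neg.tendsto' (0 : G) 0 neg_zero).eventually hnear] with u hu s
  rw [sub_eq_neg_add s u, add_vadd]
  exact (hu _ (mem_univ _)).le

end Orbits

section Separation

variable {G : Type*} [AddCommGroup G] [TopologicalSpace G] [MeasurableSpace G] {μ : Measure G}
  {B : ℕ → Set G} {X : Type*} [TopologicalSpace X] [AddAction G X] {d : X → X → ℝ} {x : X}

lemma exists_meanAPFun_ne_of_forall_meanAPFun (hd : IsCompatMetric d)
    (h : ∀ f : C(X, ℂ), MeanAPFun μ B fun t : G => f (t +ᵥ x)) {y z : X} (hyz : y ≠ z) :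
    ∃ f : C(X, ℂ), MeanAPFun μ B (fun t : G => f (t +ᵥ x)) ∧ f y ≠ f z :=
  ⟨⟨fun w => (d y w : ℂ), Complex.continuous_ofReal.comp (hd.continuous_right y)⟩, h _,
    fun hf => (hd.pos_of_ne hyz).ne (by simpa [hd.refl] using congrArg Complex.re hf)⟩

lemma exists_meanAPFun_ne_of_forall_meanAPFun_dist (hd : IsCompatMetric d)
    (h : ∀ s : G, MeanAPFun μ B fun t : G => d (s +ᵥ x) (t +ᵥ x)) {y z : X}
    (hy : y ∈ closure (orbitSet G x)) (hyz : y ≠ z) :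
    ∃ f : C(X, ℂ), MeanAPFun μ B (fun t : G => f (t +ᵥ x)) ∧ f y ≠ f z := by
  obtain ⟨_, ⟨s, rfl⟩, hs⟩ := (mem_closure_iff_nhds_basis (hd.nhds_basis y)).1 hy (d y z / 2)
    (half_pos (hd.pos_of_ne hyz))
  have hs : d y (s +ᵥ x) < d y z / 2 := hs
  refine ⟨⟨fun w => (d (s +ᵥ x) w : ℂ), Complex.continuous_ofReal.comp (hd.continuous_right _)⟩,
    (h s).ofReal, fun hf => ?_⟩
  have hsyz : d (s +ᵥ x) y = d (s +ᵥ x) z := by simpa using congrArg Complex.re hf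
  linarith [hd.triangle y (s +ᵥ x) z, hd.symm y (s +ᵥ x)]

end Separation

section Points

variable {G : Type*} [AddCommGroup G] [TopologicalSpace G] [IsTopologicalAddGroup G]
  [MeasurableSpace G] [BorelSpace G] {μ : Measure G} [μ.IsAddHaarMeasure] {B : ℕ → Set G}
  {X : Type*} [TopologicalSpace X] [CompactSpace X] [AddAction G X] [ContinuousVAdd G X]
  {d : X → X → ℝ} {x : X}

lemma MeanAPPointWith.meanAPFun_comp_vadd (hB : IsFolner μ B) (hd : IsCompatMetric d)
    (hx : MeanAPPointWith μ B d x) {E : Type*} [NormedAddCommGroup E] (f : C(X, E)) :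
    MeanAPFun μ B fun t : G => f (t +ᵥ x) := by
  intro ε hε
  obtain ⟨c, hc, hf⟩ := hd.exists_norm_sub_le_add_mul f (half_pos hε)
  refine (hx _ (div_pos hε (by positivity : (0 : ℝ) < 2 * (c + 1)))).neg.mono fun t ht => ?_
  have hdist := isBoundedContinuous_orbit_pair (G := G) (φ := d) hd.continuous x (-t +ᵥ x)
  simp only [Set.mem_neg, Set.mem_ofPred_eq] at ht
  simp only [Set.mem_ofPred_eq, sub_vadd_eq_vadd_neg_vadd]
  calc upperMean μ B (fun s => ‖f (s +ᵥ x) - f (s +ᵥ (-t +ᵥ x))‖)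
      ≤ upperMean μ B fun s => ε / 2 + c * d (s +ᵥ x) (s +ᵥ (-t +ᵥ x)) :=
        upperMean_mono hB (isBoundedContinuous_orbit_pair (φ := fun y z => ‖f y - f z‖)
          (by fun_prop) _ _) ((hdist.const_mul c).const_add _) fun s => hf _ _
    _ = ε / 2 + c * upperMean μ B fun s => d (s +ᵥ x) (s +ᵥ (-t +ᵥ x)) := by
        rw [upperMean_const_add hB (hdist.const_mul c), upperMean_const_mul hB hdist hc]
    _ < ε := by
        linarith [mul_le_mul_of_nonneg_left ht.le hc, mul_div_two_mul_add_one_lt hc hε]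

lemma MeanAPPointWith.meanAPFun_dist (hB : IsFolner μ B) (hd : IsCompatMetric d)
    (hx : MeanAPPointWith μ B d x) (s : G) : MeanAPFun μ B fun t : G => d (s +ᵥ x) (t +ᵥ x) := by
  intro ε hε
  refine (hx ε hε).neg.mono fun t ht => ?_
  simp only [Set.mem_neg, Set.mem_ofPred_eq] at ht
  simp only [Set.mem_ofPred_eq, sub_vadd_eq_vadd_neg_vadd]
  have hcont : Continuous fun p : X × X => ‖d (s +ᵥ x) p.1 - d (s +ᵥ x) p.2‖ :=
    (((hd.continuous_right _).comp continuous_fst).sub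
      ((hd.continuous_right _).comp continuous_snd)).norm
  exact (upperMean_mono hB
    (isBoundedContinuous_orbit_pair (φ := fun y z => ‖d (s +ᵥ x) y - d (s +ᵥ x) z‖) hcont x _)
    (isBoundedContinuous_orbit_pair (φ := d) hd.continuous x (-t +ᵥ x))
    fun u => (Real.norm_eq_abs _).trans_le (hd.abs_sub_le _ _ _)).trans_lt ht

lemma meanAPPointWith_of_separates (hB : IsFolner μ B) (hd : IsCompatMetric d)
    (hsep : ∀ y ∈ closure (orbitSet G x), ∀ z ∈ closure (orbitSet G x), y ≠ z →
      ∃ f : C(X, ℂ), MeanAPFun μ B (fun t : G => f (t +ᵥ x)) ∧ f y ≠ f z) :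
    MeanAPPointWith μ B d x := by
  intro ε hε
  obtain ⟨S, hSap, c, hc, hdS⟩ :=
    hd.exists_finset_le_add_mul_sum isClosed_closure.isCompact hsep (half_pos hε)
  have ha : 0 ≤ c * S.card := by positivity
  have hη : 0 < ε / (2 * (c * S.card + 1)) := by positivity
  refine (relDense_setOf_forall_meanDist_lt hB (f := fun f : S => fun t : G => f.1 (t +ᵥ x))
    (fun f => isBoundedUniformlyContinuous_comp_vadd f.1 x) (fun f => hSap f.1 f.2) hη).neg.mono
    fun t ht => ?_
  have hbc : ∀ f : C(X, ℂ), IsBoundedContinuous fun s : G => ‖f (s +ᵥ x) - f (s +ᵥ (t +ᵥ x))‖ :=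
    fun f => isBoundedContinuous_orbit_pair (φ := fun y z => ‖f y - f z‖) (by fun_prop) x _
  have hmean : ∀ f ∈ S, upperMean μ B (fun s => ‖f (s +ᵥ x) - f (s +ᵥ (t +ᵥ x))‖)
      < ε / (2 * (c * S.card + 1)) := fun f hf => by
    simpa [meanDist_zero_left, sub_neg_eq_add, add_vadd] using ht ⟨f, hf⟩
  have hsum := IsBoundedContinuous.sum S fun f _ => hbc f
  calc upperMean μ B (fun s => d (s +ᵥ x) (s +ᵥ (t +ᵥ x)))
      ≤ upperMean μ B fun s => ε / 2 + c * ∑ f ∈ S, ‖f (s +ᵥ x) - f (s +ᵥ (t +ᵥ x))‖ :=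
        upperMean_mono hB (isBoundedContinuous_orbit_pair (φ := d) hd.continuous x _)
          ((hsum.const_mul c).const_add _) fun s => hdS _ (subset_closure ⟨s, rfl⟩) _
            (subset_closure ⟨s + t, add_vadd s t x⟩)
    _ = ε / 2 + c * upperMean μ B fun s => ∑ f ∈ S, ‖f (s +ᵥ x) - f (s +ᵥ (t +ᵥ x))‖ := by
        rw [upperMean_const_add hB (hsum.const_mul c), upperMean_const_mul hB hsum hc]
    _ ≤ ε / 2 + c * ∑ f ∈ S, upperMean μ B fun s => ‖f (s +ᵥ x) - f (s +ᵥ (t +ᵥ x))‖ := by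
        gcongr
        exact upperMean_sum_le hB S fun f _ => hbc f
    _ ≤ ε / 2 + c * (S.card * (ε / (2 * (c * S.card + 1)))) := by
        gcongr
        simpa using Finset.sum_le_card_nsmul S _ _ fun f hf => (hmean f hf).le
    _ < ε := by
        rw [← mul_assoc]
        linarith [mul_div_two_mul_add_one_lt ha hε]

end Points

theorem statement_5_general
    {G : Type*} [AddCommGroup G] [TopologicalSpace G] [IsTopologicalAddGroup G]
    [MeasurableSpace G] [BorelSpace G]
    (μ : Measure G) [μ.IsAddHaarMeasure] (B : ℕ → Set G) (hB : IsFolner μ B)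
    {X : Type*} [TopologicalSpace X] [CompactSpace X]
    [AddAction G X] [ContinuousVAdd G X]
    (d : X → X → ℝ) (hd : IsCompatMetric d) (x : X) :
    (MeanAPPointWith μ B d x ↔ ∀ f : C(X, ℂ), MeanAPFun μ B fun t : G => f (t +ᵥ x)) ∧
    (MeanAPPointWith μ B d x ↔
      ∀ y ∈ closure (orbitSet G x), ∀ z ∈ closure (orbitSet G x), y ≠ z →
        ∃ f : C(X, ℂ), MeanAPFun μ B (fun t : G => f (t +ᵥ x)) ∧ f y ≠ f z) ∧
    (MeanAPPointWith μ B d x ↔ ∀ s : G, MeanAPFun μ B fun t : G => d (s +ᵥ x) (t +ᵥ x)) := by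
  have h12 (hx : MeanAPPointWith μ B d x) (f : C(X, ℂ)) :
      MeanAPFun μ B fun t : G => f (t +ᵥ x) :=
    hx.meanAPFun_comp_vadd hB hd f
  have h23 (h : ∀ f : C(X, ℂ), MeanAPFun μ B fun t : G => f (t +ᵥ x)) :
      ∀ y ∈ closure (orbitSet G x), ∀ z ∈ closure (orbitSet G x), y ≠ z →
        ∃ f : C(X, ℂ), MeanAPFun μ B (fun t : G => f (t +ᵥ x)) ∧ f y ≠ f z :=
    fun _ _ _ _ => exists_meanAPFun_ne_of_forall_meanAPFun hd h
  have h43 (h : ∀ s : G, MeanAPFun μ B fun t : G => d (s +ᵥ x) (t +ᵥ x)) :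
      ∀ y ∈ closure (orbitSet G x), ∀ z ∈ closure (orbitSet G x), y ≠ z →
        ∃ f : C(X, ℂ), MeanAPFun μ B (fun t : G => f (t +ᵥ x)) ∧ f y ≠ f z :=
    fun _ hy _ _ => exists_meanAPFun_ne_of_forall_meanAPFun_dist hd h hy
  have h31 := meanAPPointWith_of_separates hB hd (x := x)
  exact ⟨⟨h12, fun h => h31 (h23 h)⟩, ⟨fun hx => h23 (h12 hx), h31⟩,
    ⟨fun hx => hx.meanAPFun_dist hB hd, fun h => h31 (h43 h)⟩⟩

/-- Mean almost periodicity of a point via functions. -/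
theorem statement_5
    {G : Type*} [AddCommGroup G] [TopologicalSpace G] [IsTopologicalAddGroup G] [T2Space G]
    [LocallyCompactSpace G] [SigmaCompactSpace G] [MeasurableSpace G] [BorelSpace G]
    (μ : Measure G) [μ.IsAddHaarMeasure] (B : ℕ → Set G) (hB : IsFolner μ B)
    {X : Type*} [TopologicalSpace X] [CompactSpace X] [T2Space X]
    [AddAction G X] [ContinuousVAdd G X]
    (d : X → X → ℝ) (hd : IsCompatMetric d) (x : X) :
    (MeanAPPointWith μ B d x ↔ ∀ f : C(X, ℂ), MeanAPFun μ B fun t : G => f (t +ᵥ x)) ∧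
    (MeanAPPointWith μ B d x ↔
      ∀ y ∈ closure (orbitSet G x), ∀ z ∈ closure (orbitSet G x), y ≠ z →
        ∃ f : C(X, ℂ), MeanAPFun μ B (fun t : G => f (t +ᵥ x)) ∧ f y ≠ f z) ∧
    (MeanAPPointWith μ B d x ↔ ∀ s : G, MeanAPFun μ B fun t : G => d (s +ᵥ x) (t +ᵥ x)) :=
  statement_5_general μ B hB d hd x

end APPaper
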